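/- arXiv:1611.10011 — 4 statements merged into one kernel-verified Lean document; each statement's English description precedes it below -/
import Mathlib

section
/- (Lemma 4.7, deterministic form.) Suppose θ̂ ∈ ℝ^p satisfies ‖θ₀ − θ̂‖₁ ≤ 2‖θ₀‖₁, and set h := θ₀ − θ̂. Then (ν/2) · hᵀ V(θ₀) h ≤ ⟨h, ψ(θ̂) − ψ(θ₀)⟩. -/
/-!
Write `h = θ₀ - θ̂`, `s_k = ⟨h, z_k⟩` and `w_k = e^{-2⟨θ₀,z_k⟩}(x_k - x_{k-1})² ≥ 0`. Since
`e^{-2⟨θ̂,z_k⟩} = e^{-2⟨θ₀,z_k⟩} e^{2 s_k}`, the `-Δ` terms cancel in `ψ(θ̂) - ψ(θ₀)` and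
both sides become sums over `k`: `hᵀ V(θ₀) h ∝ 2 Σ_k w_k s_k²` and
`⟨h, ψ(θ̂) - ψ(θ₀)⟩ ∝ Σ_k w_k s_k (e^{2 s_k} - 1) = Σ_k w_k g(s_k) s_k²`, with the same
nonnegative factor `1/(nΔ)`. The ℓ₁ bound on `h` gives `|s_k| ≤ 2C‖θ₀‖₁`, so `g(s_k) ≥ ν`
term by term.
-/

open Finset

/-- ℓ₁ norm on `Fin p → ℝ`. -/
noncomputable def l1 {p : ℕ} (v : Fin p → ℝ) : ℝ := ∑ i, |v i|

/-- ℓ₁ norm of the subvector indexed by `T`. -/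
noncomputable def l1on {p : ℕ} (T : Finset (Fin p)) (v : Fin p → ℝ) : ℝ := ∑ i ∈ T, |v i|

/-- ℓ₂ norm on `Fin p → ℝ`. -/
noncomputable def l2 {p : ℕ} (v : Fin p → ℝ) : ℝ := Real.sqrt (∑ i, (v i) ^ 2)

/-- ℓ_∞ norm on `Fin p → ℝ`. -/
noncomputable def linf {p : ℕ} (v : Fin p → ℝ) : ℝ := ⨆ i, |v i|

/-- ℓ_q norm on `Fin p → ℝ` for real `q ≥ 1`. -/
noncomputable def lqnorm {p : ℕ} (q : ℝ) (v : Fin p → ℝ) : ℝ := (∑ i, |v i| ^ q) ^ (1 / q)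

/-- Quadratic form `hᵀ J h`. -/
noncomputable def quadForm {p : ℕ} (J : Matrix (Fin p) (Fin p) ℝ) (h : Fin p → ℝ) : ℝ :=
  ∑ i, ∑ j, h i * J i j * h j

/-- The cone `C_T = {h : ‖h_{Tᶜ}‖₁ ≤ ‖h_T‖₁}`. -/
def cone {p : ℕ} (T : Finset (Fin p)) : Set (Fin p → ℝ) := {h | l1on Tᶜ h ≤ l1on T h}

/-- Compatibility factor `κ(T; J)`. -/
noncomputable def kappa {p : ℕ} (T : Finset (Fin p)) (J : Matrix (Fin p) (Fin p) ℝ) : ℝ :=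
  sInf {r | ∃ h : Fin p → ℝ, h ≠ 0 ∧ h ∈ cone T ∧
    r = Real.sqrt T.card * Real.sqrt (quadForm J h) / l1on T h}

/-- Restricted eigenvalue `RE(T; J)`. -/
noncomputable def RE {p : ℕ} (T : Finset (Fin p)) (J : Matrix (Fin p) (Fin p) ℝ) : ℝ :=
  sInf {r | ∃ h : Fin p → ℝ, h ≠ 0 ∧ h ∈ cone T ∧
    r = Real.sqrt (quadForm J h) / l2 h}

/-- Weak cone invertibility factor at `q = ∞`, `F_∞(T; J)`. -/
noncomputable def Finf {p : ℕ} (T : Finset (Fin p)) (J : Matrix (Fin p) (Fin p) ℝ) : ℝ :=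
  sInf {r | ∃ h : Fin p → ℝ, h ≠ 0 ∧ h ∈ cone T ∧
    r = Real.sqrt (quadForm J h) / linf h}

/-- Weak cone invertibility factor `F_q(T; J)` for `q ∈ [1,∞)`
(with the quadratic form without square root, as in the paper's proofs). -/
noncomputable def Fq {p : ℕ} (q : ℝ) (T : Finset (Fin p)) (J : Matrix (Fin p) (Fin p) ℝ) : ℝ :=
  sInf {r | ∃ h : Fin p → ℝ, h ≠ 0 ∧ h ∈ cone T ∧
    r = (T.card : ℝ) ^ (1 / q) * quadForm J h / (l1on T h * lqnorm q h)}

/-- `g(x) = (e^{2x} - 1)/x` for `x ≠ 0`, `g(0) = 2`. -/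
noncomputable def g (x : ℝ) : ℝ := if x = 0 then 2 else (Real.exp (2 * x) - 1) / x

/-- Gradient of the log-quasi-likelihood (divided by `n`), with `b = 0`, `Δ = 1/n`:
`ψ(θ)_i = (1/(nΔ)) Σ_k z_{k,i}(e^{-2⟨θ,z_k⟩}(x_k - x_{k-1})² - Δ)`. -/
noncomputable def psiD {n p : ℕ} (x : Fin (n + 1) → ℝ) (z : Fin n → Fin p → ℝ)
    (θ : Fin p → ℝ) (i : Fin p) : ℝ :=
  (1 / ((n : ℝ) * (1 / n))) * ∑ k, z k i *
    (Real.exp (-2 * ∑ j, θ j * z k j) * (x k.succ - x k.castSucc) ^ 2 - 1 / n)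

/-- Negative Hessian (divided by `n`):
`V(θ) = (2/(nΔ)) Σ_k e^{-2⟨θ,z_k⟩}(x_k - x_{k-1})² z_k z_kᵀ`. -/
noncomputable def VD {n p : ℕ} (x : Fin (n + 1) → ℝ) (z : Fin n → Fin p → ℝ)
    (θ : Fin p → ℝ) : Matrix (Fin p) (Fin p) ℝ := fun i j =>
  (2 / ((n : ℝ) * (1 / n))) * ∑ k, Real.exp (-2 * ∑ l, θ l * z k l) *
    (x k.succ - x k.castSucc) ^ 2 * z k i * z k j

/-- `J = (2/n) Σ_k z_k z_kᵀ`. -/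
noncomputable def JD {n p : ℕ} (z : Fin n → Fin p → ℝ) : Matrix (Fin p) (Fin p) ℝ :=
  fun i j => (2 / (n : ℝ)) * ∑ k, z k i * z k j

/-- `ε = max_{i,j} |(V(θ) - J)_{ij}|`. -/
noncomputable def epsD {n p : ℕ} (x : Fin (n + 1) → ℝ) (z : Fin n → Fin p → ℝ)
    (θ : Fin p → ℝ) : ℝ :=
  ⨆ i, ⨆ j, |VD x z θ i j - JD z i j|

open Matrix

lemma g_mul_sq (t : ℝ) : g t * t ^ 2 = t * (Real.exp (2 * t) - 1) := by
  rcases eq_or_ne t 0 with rfl | ht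
  · simp
  · rw [g, if_neg ht]
    field_simp

lemma mul_sq_le_of_le_g {ν t : ℝ} (hν : ν ≤ g t) : ν * t ^ 2 ≤ t * (Real.exp (2 * t) - 1) :=
  g_mul_sq t ▸ mul_le_mul_of_nonneg_right hν (sq_nonneg t)

lemma abs_dotProduct_le_mul_l1 {p : ℕ} {C : ℝ} (h w : Fin p → ℝ) (hw : ∀ i, |w i| ≤ C) :
    |h ⬝ᵥ w| ≤ C * l1 h := by
  calc |h ⬝ᵥ w| ≤ ∑ i, |h i| * |w i| := by
        simpa only [dotProduct, abs_mul] using abs_sum_le_sum_abs (fun i => h i * w i) univ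
    _ ≤ ∑ i, |h i| * C := by gcongr with i; exact hw i
    _ = C * l1 h := by rw [l1, ← sum_mul, mul_comm]

lemma quadForm_weighted_gram {n p : ℕ} (c : ℝ) (a : Fin n → ℝ) (z : Fin n → Fin p → ℝ)
    (h : Fin p → ℝ) :
    quadForm (fun i j => c * ∑ k, a k * z k i * z k j) h = c * ∑ k, a k * (h ⬝ᵥ z k) ^ 2 := by
  simp only [quadForm, dotProduct, sq, mul_sum, sum_mul]
  rw [sum_comm_cycle]
  exact sum_congr rfl fun k _ => sum_congr rfl fun i _ => sum_congr rfl fun j _ => by ring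

lemma sum_mul_sum_eq_sum_dotProduct_mul {n p : ℕ} (h : Fin p → ℝ) (z : Fin n → Fin p → ℝ)
    (b : Fin n → ℝ) :
    ∑ i, h i * ∑ k, z k i * b k = ∑ k, (h ⬝ᵥ z k) * b k := by
  simp only [dotProduct, mul_sum, sum_mul]
  rw [sum_comm]
  exact sum_congr rfl fun k _ => sum_congr rfl fun i _ => by ring

section Model

variable {n p : ℕ} (x : Fin (n + 1) → ℝ) (z : Fin n → Fin p → ℝ)

noncomputable def stepWeight (θ : Fin p → ℝ) (k : Fin n) : ℝ :=
  Real.exp (-2 * (θ ⬝ᵥ z k)) * (x k.succ - x k.castSucc) ^ 2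

lemma stepWeight_nonneg (θ : Fin p → ℝ) (k : Fin n) : 0 ≤ stepWeight x z θ k := by
  unfold stepWeight
  positivity

lemma stepWeight_eq_mul_exp (θ θ' : Fin p → ℝ) (k : Fin n) :
    stepWeight x z θ' k = stepWeight x z θ k * Real.exp (2 * ((θ - θ') ⬝ᵥ z k)) := by
  rw [stepWeight, stepWeight, mul_right_comm, ← Real.exp_add, sub_dotProduct]
  ring_nf

lemma quadForm_VD (θ h : Fin p → ℝ) :
    quadForm (VD x z θ) h =
      2 / ((n : ℝ) * (1 / n)) * ∑ k, stepWeight x z θ k * (h ⬝ᵥ z k) ^ 2 :=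
  quadForm_weighted_gram _ _ z h

lemma psiD_sub_psiD (θ θ' : Fin p → ℝ) (i : Fin p) :
    psiD x z θ' i - psiD x z θ i =
      1 / ((n : ℝ) * (1 / n)) * ∑ k, z k i * (stepWeight x z θ' k - stepWeight x z θ k) := by
  simp only [psiD, stepWeight, dotProduct, ← mul_sub, ← sum_sub_distrib]
  exact congrArg _ (sum_congr rfl fun k _ => by ring)

lemma sum_mul_psiD_sub_psiD (θ θ' h : Fin p → ℝ) :
    ∑ i, h i * (psiD x z θ' i - psiD x z θ i) =
      1 / ((n : ℝ) * (1 / n)) *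
        ∑ k, (h ⬝ᵥ z k) * (stepWeight x z θ' k - stepWeight x z θ k) := by
  simp only [psiD_sub_psiD, mul_left_comm (h _), ← mul_sum,
    sum_mul_sum_eq_sum_dotProduct_mul]

end Model

theorem lemma_4_7_deterministic_general
    (n p : ℕ)
    (C : ℝ) (hC : 0 < C)
    (x : Fin (n + 1) → ℝ) (z : Fin n → Fin p → ℝ)
    (hz : ∀ k i, |z k i| ≤ C)
    (θ₀ θhat : Fin p → ℝ)
    (hdist : l1 (θ₀ - θhat) ≤ 2 * l1 θ₀)
    (ν : ℝ) (hν : IsLeast (g '' Set.Icc (-(2 * C * l1 θ₀)) (2 * C * l1 θ₀)) ν) :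
    ν / 2 * quadForm (VD x z θ₀) (θ₀ - θhat) ≤
      ∑ i, (θ₀ - θhat) i * (psiD x z θhat i - psiD x z θ₀ i) := by
  set h := θ₀ - θhat
  set w := stepWeight x z θ₀
  have hs : ∀ k, ν * (h ⬝ᵥ z k) ^ 2 ≤ (h ⬝ᵥ z k) * (Real.exp (2 * (h ⬝ᵥ z k)) - 1) := by
    intro k
    have hsk : |h ⬝ᵥ z k| ≤ 2 * C * l1 θ₀ := by
      calc |h ⬝ᵥ z k| ≤ C * l1 h := abs_dotProduct_le_mul_l1 h (z k) (hz k)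
        _ ≤ C * (2 * l1 θ₀) := by gcongr
        _ = 2 * C * l1 θ₀ := by ring
    exact mul_sq_le_of_le_g (hν.2 ⟨_, abs_le.mp hsk, rfl⟩)
  rw [quadForm_VD, sum_mul_psiD_sub_psiD]
  set c := 1 / ((n : ℝ) * (1 / n))
  calc ν / 2 * (2 / ((n : ℝ) * (1 / n)) * ∑ k, w k * (h ⬝ᵥ z k) ^ 2)
      = c * ∑ k, w k * (ν * (h ⬝ᵥ z k) ^ 2) := by
        rw [mul_sum, mul_sum, mul_sum]
        exact sum_congr rfl fun k _ => by ring
    _ ≤ c * ∑ k, w k * ((h ⬝ᵥ z k) * (Real.exp (2 * (h ⬝ᵥ z k)) - 1)) := by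
        gcongr _ * ∑ k, _ * ?_ with k
        · exact stepWeight_nonneg x z θ₀ k
        · exact hs k
    _ = c * ∑ k, (h ⬝ᵥ z k) * (stepWeight x z θhat k - w k) := by
        simp only [w, stepWeight_eq_mul_exp x z θ₀ θhat]
        exact congrArg _ (sum_congr rfl fun k _ => by ring)

/-- Lemma 4.7 (deterministic form): if `‖θ₀ - θ̂‖₁ ≤ 2‖θ₀‖₁` then with `h := θ₀ - θ̂`,
`(ν/2) hᵀ V(θ₀) h ≤ ⟨h, ψ(θ̂) - ψ(θ₀)⟩`. -/
theorem lemma_4_7_deterministic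
    (n p : ℕ) (hn : 0 < n) (hp : 0 < p)
    (C : ℝ) (hC : 0 < C)
    (x : Fin (n + 1) → ℝ) (z : Fin n → Fin p → ℝ)
    (hz : ∀ k i, |z k i| ≤ C)
    (θ₀ θhat : Fin p → ℝ)
    (hdist : l1 (θ₀ - θhat) ≤ 2 * l1 θ₀)
    (ν : ℝ) (hν : IsLeast (g '' Set.Icc (-(2 * C * l1 θ₀)) (2 * C * l1 θ₀)) ν) :
    ν / 2 * quadForm (VD x z θ₀) (θ₀ - θhat) ≤
      ∑ i, (θ₀ - θhat) i * (psiD x z θhat i - psiD x z θ₀ i) :=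
  lemma_4_7_deterministic_general n p C hC x z hz θ₀ θhat hdist ν hν
end

section
/- (Theorem 3.2(i), deterministic core.) Under the Dantzig-selector hypotheses, with h := θ₀ − θ̂, S := |T₀|, K₄ := 4/ν and ε := max_{i,j} |(V(θ₀) − J)_{ij}|: if κ(T₀; J)² > 4 S ε, then ‖θ̂ − θ₀‖₁ ≤ 4 K₄ S γ / (κ(T₀; J)² − 4 S ε). -/
open Finset

/-! Write `h = θ̂ - θ₀`. Since `θ₀` is supported on `T₀` and `‖θ̂‖₁ ≤ ‖θ₀‖₁`, `h` lies in the cone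
`C_{T₀}`, and `‖h‖₁ ≤ 2‖θ₀‖₁` keeps every `⟨h, z_k⟩` inside `I`. There the secant slopes of the
exponential are at least `ν`, so `ν hᵀV(θ₀)h ≤ 2⟨h, ψ(θ₀) - ψ(θ̂)⟩ ≤ 4γ‖h‖₁` by feasibility of both
points. Replacing `V(θ₀)` by `J` costs at most `ε‖h‖₁²`, and the compatibility factor gives
`κ²‖h‖₁² ≤ 4S hᵀJh` on the cone; together `(κ² - 4Sε)‖h‖₁² ≤ 4K₄Sγ‖h‖₁`. -/

open Matrix

section Norms

variable {p : ℕ}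

lemma l1on_nonneg (T : Finset (Fin p)) (v : Fin p → ℝ) : 0 ≤ l1on T v :=
  sum_nonneg fun i _ => abs_nonneg (v i)

lemma l1_nonneg (v : Fin p → ℝ) : 0 ≤ l1 v :=
  sum_nonneg fun i _ => abs_nonneg (v i)

lemma l1_pos {v : Fin p → ℝ} (hv : v ≠ 0) : 0 < l1 v := by
  obtain ⟨i, hi⟩ := Function.ne_iff.mp hv
  exact sum_pos' (fun j _ => abs_nonneg (v j)) ⟨i, mem_univ i, abs_pos.mpr hi⟩

lemma l1_eq_l1on_add_l1on_compl (T : Finset (Fin p)) (v : Fin p → ℝ) :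
    l1 v = l1on T v + l1on Tᶜ v :=
  (sum_add_sum_compl T _).symm

lemma abs_le_linf (v : Fin p → ℝ) (i : Fin p) : |v i| ≤ linf v :=
  le_ciSup (f := fun i => |v i|) (Set.finite_range _).bddAbove i

lemma l1_sub_le_two_mul {v w : Fin p → ℝ} (hwv : l1 w ≤ l1 v) : l1 (w - v) ≤ 2 * l1 v := by
  have : l1 (w - v) ≤ l1 w + l1 v := by
    rw [l1, l1, l1, ← sum_add_distrib]
    exact sum_le_sum fun i _ => abs_sub (w i) (v i)
  linarith

lemma abs_dotProduct_le_l1_mul {h z : Fin p → ℝ} {C : ℝ} (hz : ∀ i, |z i| ≤ C) :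
    |h ⬝ᵥ z| ≤ l1 h * C := by
  calc |h ⬝ᵥ z| ≤ ∑ i, |h i * z i| := abs_sum_le_sum_abs _ _
    _ ≤ ∑ i, |h i| * C := sum_le_sum fun i _ => by
        rw [abs_mul]; exact mul_le_mul_of_nonneg_left (hz i) (abs_nonneg _)
    _ = l1 h * C := by rw [l1, sum_mul]

lemma dotProduct_sub_le_l1_mul (h a b : Fin p → ℝ) :
    h ⬝ᵥ (a - b) ≤ l1 h * (linf a + linf b) := by
  calc h ⬝ᵥ (a - b) ≤ ∑ i, |h i * (a i - b i)| := (le_abs_self _).trans (abs_sum_le_sum_abs _ _)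
    _ ≤ ∑ i, |h i| * (linf a + linf b) := sum_le_sum fun i _ => by
        rw [abs_mul]
        refine mul_le_mul_of_nonneg_left ?_ (abs_nonneg _)
        linarith [abs_sub (a i) (b i), abs_le_linf a i, abs_le_linf b i]
    _ = l1 h * (linf a + linf b) := by rw [l1, sum_mul]

end Norms

section Cone

variable {p : ℕ} {T : Finset (Fin p)}

lemma sub_mem_cone_of_l1_le {v w : Fin p → ℝ} (hv : ∀ i ∉ T, v i = 0) (hwv : l1 w ≤ l1 v) :
    w - v ∈ cone T := by
  have hvT : l1 v = l1on T v := by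
    rw [l1_eq_l1on_add_l1on_compl T, add_eq_left]
    exact sum_eq_zero fun i hi => by rw [hv i (mem_compl.mp hi), abs_zero]
  have hwTc : l1on Tᶜ w = l1on Tᶜ (w - v) :=
    sum_congr rfl fun i hi => by rw [Pi.sub_apply, hv i (mem_compl.mp hi), sub_zero]
  have hwT : l1on T v - l1on T (w - v) ≤ l1on T w := by
    rw [l1on, l1on, l1on, ← sum_sub_distrib]
    refine sum_le_sum fun i _ => ?_
    rw [Pi.sub_apply, abs_sub_comm]
    linarith [abs_sub_abs_le_abs_sub (v i) (w i)]
  have := l1_eq_l1on_add_l1on_compl T w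
  change l1on Tᶜ (w - v) ≤ l1on T (w - v)
  linarith

lemma l1_le_two_mul_l1on_of_mem_cone {h : Fin p → ℝ} (hh : h ∈ cone T) :
    l1 h ≤ 2 * l1on T h := by
  have : l1on Tᶜ h ≤ l1on T h := hh
  linarith [l1_eq_l1on_add_l1on_compl T h]

lemma kappa_sq_mul_l1_sq_le {J : Matrix (Fin p) (Fin p) ℝ} {h : Fin p → ℝ}
    (hJ : 0 ≤ quadForm J h) (hh : h ∈ cone T) :
    kappa T J ^ 2 * l1 h ^ 2 ≤ 4 * T.card * quadForm J h := by
  rcases eq_or_ne h 0 with rfl | hne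
  · simp only [l1, Pi.zero_apply, abs_zero, sum_const_zero, ne_eq, OfNat.ofNat_ne_zero,
      not_false_eq_true, zero_pow, mul_zero]
    positivity
  have hT := l1_le_two_mul_l1on_of_mem_cone hh
  have hTpos : 0 < l1on T h := by linarith [l1_pos hne]
  obtain ⟨hκ0, hκ⟩ :
      0 ≤ kappa T J ∧ kappa T J ≤ √(T.card : ℝ) * √(quadForm J h) / l1on T h := by
    refine ⟨le_csInf ⟨_, h, hne, hh, rfl⟩ ?_, csInf_le ⟨0, ?_⟩ ⟨h, hne, hh, rfl⟩⟩ <;>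
      rintro _ ⟨h', -, -, rfl⟩ <;> exact div_nonneg (by positivity) (l1on_nonneg T h')
  rw [le_div_iff₀ hTpos] at hκ
  calc kappa T J ^ 2 * l1 h ^ 2 = (kappa T J * l1 h) ^ 2 := by ring
    _ ≤ (2 * (√(T.card : ℝ) * √(quadForm J h))) ^ 2 := by
        have := mul_le_mul_of_nonneg_left hT hκ0
        exact pow_le_pow_left₀ (mul_nonneg hκ0 (l1_nonneg h)) (by linarith) 2
    _ = 4 * T.card * quadForm J h := by
        rw [mul_pow, mul_pow, Real.sq_sqrt (Nat.cast_nonneg _), Real.sq_sqrt hJ]; ring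

end Cone

section QuadForm

variable {n p : ℕ}

lemma quadForm_le_add_of_abs_sub_le {A B : Matrix (Fin p) (Fin p) ℝ} {ε : ℝ}
    (hAB : ∀ i j, |A i j - B i j| ≤ ε) (h : Fin p → ℝ) :
    quadForm B h ≤ quadForm A h + ε * l1 h ^ 2 := by
  have : quadForm B h - quadForm A h ≤ ε * l1 h ^ 2 := by
    calc quadForm B h - quadForm A h = ∑ i, ∑ j, h i * h j * (B i j - A i j) := by
          simp only [quadForm, ← sum_sub_distrib]
          exact sum_congr rfl fun i _ => sum_congr rfl fun j _ => by ring
      _ ≤ ∑ i, ∑ j, |h i| * |h j| * ε := by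
          refine sum_le_sum fun i _ => sum_le_sum fun j _ => ?_
          calc h i * h j * (B i j - A i j) ≤ |h i * h j * (B i j - A i j)| := le_abs_self _
            _ = |h i| * |h j| * |A i j - B i j| := by rw [abs_mul, abs_mul, abs_sub_comm]
            _ ≤ |h i| * |h j| * ε := mul_le_mul_of_nonneg_left (hAB i j) (by positivity)
      _ = ε * l1 h ^ 2 := by
          rw [l1, sq, sum_mul_sum, mul_sum]
          exact sum_congr rfl fun i _ => by rw [mul_sum]; exact sum_congr rfl fun j _ => by ring
  linarith

def weightedGram (w : Fin n → ℝ) (z : Fin n → Fin p → ℝ) : Matrix (Fin p) (Fin p) ℝ :=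
  fun i j => ∑ k, w k * z k i * z k j

lemma quadForm_weightedGram (w : Fin n → ℝ) (z : Fin n → Fin p → ℝ) (h : Fin p → ℝ) :
    quadForm (weightedGram w z) h = ∑ k, w k * (h ⬝ᵥ z k) ^ 2 := by
  simp only [quadForm, weightedGram, dotProduct, sq, mul_sum, sum_mul]
  symm
  rw [sum_comm]
  refine sum_congr rfl fun i _ => ?_
  rw [sum_comm]
  exact sum_congr rfl fun j _ => sum_congr rfl fun k _ => by ring

lemma quadForm_weightedGram_nonneg {w : Fin n → ℝ} (hw : ∀ k, 0 ≤ w k) (z : Fin n → Fin p → ℝ)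
    (h : Fin p → ℝ) : 0 ≤ quadForm (weightedGram w z) h := by
  rw [quadForm_weightedGram]
  exact sum_nonneg fun k _ => mul_nonneg (hw k) (sq_nonneg _)

end QuadForm

section Model

variable {n p : ℕ} (x : Fin (n + 1) → ℝ) (z : Fin n → Fin p → ℝ)

lemma g_pos (u : ℝ) : 0 < g u := by
  unfold g
  split_ifs with hu
  · norm_num
  rcases lt_or_gt_of_ne hu with hu | hu
  · exact div_pos_of_neg_of_neg (by linarith [Real.exp_lt_one_iff.mpr (by linarith : 2 * u < 0)]) hu
  · exact div_pos (by linarith [Real.one_lt_exp_iff.mpr (by linarith : 0 < 2 * u)]) hu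

lemma sq_mul_g_neg (u : ℝ) : u ^ 2 * g (-u) = u * (1 - Real.exp (-2 * u)) := by
  rcases eq_or_ne u 0 with rfl | hu
  · simp
  · rw [g, if_neg (neg_ne_zero.mpr hu), show 2 * -u = -2 * u by ring]
    field_simp
    ring

/-- `(x_k - x_{k-1})²` divided by the squared volatility `e^{2⟨θ, z_k⟩}`. -/
noncomputable def scaledSqIncr (θ : Fin p → ℝ) (k : Fin n) : ℝ :=
  Real.exp (-2 * (θ ⬝ᵥ z k)) * (x k.succ - x k.castSucc) ^ 2

lemma scaledSqIncr_nonneg (θ : Fin p → ℝ) (k : Fin n) : 0 ≤ scaledSqIncr x z θ k := by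
  unfold scaledSqIncr; positivity

lemma scaledSqIncr_add (θ h : Fin p → ℝ) (k : Fin n) :
    scaledSqIncr x z (θ + h) k = scaledSqIncr x z θ k * Real.exp (-2 * (h ⬝ᵥ z k)) := by
  rw [scaledSqIncr, scaledSqIncr, add_dotProduct, mul_add, Real.exp_add]
  ring

lemma JD_eq_weightedGram : JD z = weightedGram (fun _ => 2 / n) z := by
  ext i j
  rw [JD, mul_sum]
  exact sum_congr rfl fun k _ => by ring

lemma quadForm_JD_nonneg (h : Fin p → ℝ) : 0 ≤ quadForm (JD z) h := by
  rw [JD_eq_weightedGram z]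
  exact quadForm_weightedGram_nonneg (fun _ => by positivity) z h

variable {x z}

lemma psiD_eq (hn : 0 < n) (θ : Fin p → ℝ) (i : Fin p) :
    psiD x z θ i = ∑ k, z k i * (scaledSqIncr x z θ k - 1 / n) := by
  have : (n : ℝ) * (1 / n) = 1 := by field_simp
  rw [psiD, this, div_one, one_mul]
  rfl

lemma VD_eq_weightedGram (hn : 0 < n) (θ : Fin p → ℝ) :
    VD x z θ = weightedGram (fun k => 2 * scaledSqIncr x z θ k) z := by
  have : (n : ℝ) * (1 / n) = 1 := by field_simp
  ext i j
  rw [VD, this, div_one, mul_sum]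
  exact sum_congr rfl fun k _ => by simp only [scaledSqIncr, dotProduct]; ring

lemma dotProduct_psiD_sub (hn : 0 < n) (θ₀ θ h : Fin p → ℝ) :
    h ⬝ᵥ (psiD x z θ₀ - psiD x z θ) =
      ∑ k, (h ⬝ᵥ z k) * (scaledSqIncr x z θ₀ k - scaledSqIncr x z θ k) := by
  simp only [dotProduct, Pi.sub_apply, psiD_eq hn, ← sum_sub_distrib, mul_sum, sum_mul]
  rw [sum_comm]
  exact sum_congr rfl fun k _ => sum_congr rfl fun i _ => by ring

/-- Since `u (1 - e^{-2u}) = u² g(-u)`, a lower bound `ν` on `g` is a lower bound on the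
curvature of the quasi-likelihood between `θ₀` and `θ₀ + h`. -/
lemma mul_quadForm_VD_le (hn : 0 < n) {θ₀ h : Fin p → ℝ} {ν : ℝ}
    (hν : ∀ k, ν ≤ g (-(h ⬝ᵥ z k))) :
    ν * quadForm (VD x z θ₀) h ≤ 2 * (h ⬝ᵥ (psiD x z θ₀ - psiD x z (θ₀ + h))) := by
  rw [VD_eq_weightedGram hn, quadForm_weightedGram, dotProduct_psiD_sub hn, mul_sum, mul_sum]
  refine sum_le_sum fun k _ => ?_
  have hg : ν * (h ⬝ᵥ z k) ^ 2 ≤ (h ⬝ᵥ z k) * (1 - Real.exp (-2 * (h ⬝ᵥ z k))) := by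
    rw [← sq_mul_g_neg, mul_comm]
    exact mul_le_mul_of_nonneg_left (hν k) (sq_nonneg _)
  rw [scaledSqIncr_add]
  linarith [mul_le_mul_of_nonneg_left hg (scaledSqIncr_nonneg x z θ₀ k)]

lemma abs_VD_sub_JD_le_epsD (θ : Fin p → ℝ) (i j : Fin p) :
    |VD x z θ i j - JD z i j| ≤ epsD x z θ :=
  (le_ciSup (f := fun j => |VD x z θ i j - JD z i j|) (Set.finite_range _).bddAbove j).trans
    (le_ciSup (f := fun i => ⨆ j, |VD x z θ i j - JD z i j|) (Set.finite_range _).bddAbove i)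

end Model

lemma le_div_of_mul_sq_le_mul {t a b : ℝ} (ht : 0 ≤ t) (ha : 0 < a) (hb : 0 ≤ b)
    (h : a * t ^ 2 ≤ b * t) : t ≤ b / a := by
  rw [le_div_iff₀ ha]
  rcases ht.eq_or_lt with rfl | ht
  · simpa using hb
  · nlinarith

theorem theorem_3_2_i_general
    (n p : ℕ) (hn : 0 < n)
    (C : ℝ) (hC : 0 < C)
    (x : Fin (n + 1) → ℝ) (z : Fin n → Fin p → ℝ)
    (hz : ∀ k i, |z k i| ≤ C)
    (θ₀ θhat : Fin p → ℝ)
    (ν : ℝ) (hν : IsLeast (g '' Set.Icc (-(2 * C * l1 θ₀)) (2 * C * l1 θ₀)) ν)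
    (γ : ℝ) (hγ : 0 < γ)
    (hfeas : linf (psiD x z θhat) ≤ γ)
    (hmin : l1 θhat ≤ l1 θ₀)
    (htrue : linf (psiD x z θ₀) ≤ γ)
    (hκ : 4 * ((Finset.univ.filter fun j => θ₀ j ≠ 0).card : ℝ) * epsD x z θ₀ <
      kappa (Finset.univ.filter fun j => θ₀ j ≠ 0) (JD z) ^ 2) :
    l1 (θhat - θ₀) ≤
      4 * (4 / ν) * ((Finset.univ.filter fun j => θ₀ j ≠ 0).card : ℝ) * γ /
        (kappa (Finset.univ.filter fun j => θ₀ j ≠ 0) (JD z) ^ 2 -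
          4 * ((Finset.univ.filter fun j => θ₀ j ≠ 0).card : ℝ) * epsD x z θ₀) := by
  set T₀ := Finset.univ.filter fun j => θ₀ j ≠ 0
  set h := θhat - θ₀
  have hν0 : 0 < ν := by
    obtain ⟨u, -, rfl⟩ := hν.1
    exact g_pos u
  have hcone : h ∈ cone T₀ := sub_mem_cone_of_l1_le (fun i hi => by simpa [T₀] using hi) hmin
  have hgν : ∀ k, ν ≤ g (-(h ⬝ᵥ z k)) := fun k => by
    refine hν.2 ⟨_, ?_, rfl⟩
    have := (abs_dotProduct_le_l1_mul (hz k)).trans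
      (mul_le_mul_of_nonneg_right (l1_sub_le_two_mul hmin) hC.le)
    constructor <;> linarith [neg_abs_le (h ⬝ᵥ z k), le_abs_self (h ⬝ᵥ z k)]
  have hV : ν * quadForm (VD x z θ₀) h ≤ 4 * γ * l1 h :=
    calc ν * quadForm (VD x z θ₀) h
        ≤ 2 * (h ⬝ᵥ (psiD x z θ₀ - psiD x z θhat)) := by
          simpa only [h, add_sub_cancel] using mul_quadForm_VD_le (x := x) (θ₀ := θ₀) hn hgν
      _ ≤ 2 * (l1 h * (linf (psiD x z θ₀) + linf (psiD x z θhat))) := by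
          gcongr; exact dotProduct_sub_le_l1_mul _ _ _
      _ ≤ 4 * γ * l1 h := by nlinarith [l1_nonneg h]
  have hJ : quadForm (JD z) h ≤ quadForm (VD x z θ₀) h + epsD x z θ₀ * l1 h ^ 2 :=
    quadForm_le_add_of_abs_sub_le (abs_VD_sub_JD_le_epsD θ₀) h
  have hκh := kappa_sq_mul_l1_sq_le (quadForm_JD_nonneg z h) hcone
  refine le_div_of_mul_sq_le_mul (l1_nonneg h) (sub_pos.mpr hκ) (by positivity) ?_
  have hV' : quadForm (VD x z θ₀) h ≤ 4 / ν * γ * l1 h := by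
    rw [div_mul_eq_mul_div, div_mul_eq_mul_div, le_div_iff₀' hν0]; linarith
  have hS : (0 : ℝ) ≤ T₀.card := Nat.cast_nonneg _
  nlinarith [mul_le_mul_of_nonneg_left (hJ.trans (add_le_add_left hV' _)) hS]

/-- Theorem 3.2(i), deterministic core: with `S := |T₀|`, `K₄ := 4/ν` and
`ε := max_{i,j} |(V(θ₀) - J)_{ij}|`: if `κ(T₀;J)² > 4Sε` then
`‖θ̂ - θ₀‖₁ ≤ 4K₄Sγ/(κ(T₀;J)² - 4Sε)`. -/
theorem theorem_3_2_i
    (n p : ℕ) (hn : 0 < n) (hp : 0 < p)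
    (C : ℝ) (hC : 0 < C)
    (x : Fin (n + 1) → ℝ) (z : Fin n → Fin p → ℝ)
    (hz : ∀ k i, |z k i| ≤ C)
    (θ₀ θhat : Fin p → ℝ)
    (ν : ℝ) (hν : IsLeast (g '' Set.Icc (-(2 * C * l1 θ₀)) (2 * C * l1 θ₀)) ν)
    (γ : ℝ) (hγ : 0 < γ)
    (hfeas : linf (psiD x z θhat) ≤ γ)
    (hmin : l1 θhat ≤ l1 θ₀)
    (htrue : linf (psiD x z θ₀) ≤ γ)
    (hθ₀ : θ₀ ≠ 0)
    (hκ : 4 * ((Finset.univ.filter fun j => θ₀ j ≠ 0).card : ℝ) * epsD x z θ₀ <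
      kappa (Finset.univ.filter fun j => θ₀ j ≠ 0) (JD z) ^ 2) :
    l1 (θhat - θ₀) ≤
      4 * (4 / ν) * ((Finset.univ.filter fun j => θ₀ j ≠ 0).card : ℝ) * γ /
        (kappa (Finset.univ.filter fun j => θ₀ j ≠ 0) (JD z) ^ 2 -
          4 * ((Finset.univ.filter fun j => θ₀ j ≠ 0).card : ℝ) * epsD x z θ₀) :=
  theorem_3_2_i_general n p hn C hC x z hz θ₀ θhat ν hν γ hγ hfeas hmin htrue hκ
end

section
/- (Compensator part in the proof of Lemma 4.4.) Let C > 0 be a constant. On a probability space carrying a filtration (F_t)_{t≥0} and a standard Brownian motion W with respect to (F_t), let n, p ∈ ℕ and let Z^1, …, Z^p be (F_t)-adapted real-valued processes on [0, 1] with sup_{t∈[0,1]} max_{1≤i≤p} |Z_t^i| ≤ C. Set Δ := 1/n, t_k := k/n, U_k := (W_{t_k} − W_{t_{k−1}})² − Δ, and for η > 0 let I_n^i := (1/(nΔ)) Σ_{k=1}^n Z_{t_{k−1}}^i · E[ −U_k 1_{|U_k| > η} | F_{t_{k−1}} ]. Then for every γ > 0 and η > 0, P( max_{1≤i≤p} |I_n^i|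 ≥ γ ) ≤ 2CΔ/(γη). -/
/-!
Since the increment `W_{t_k} - W_{t_{k-1}}` is independent of `F_{t_{k-1}}` with law `N(0, Δ)`,
each conditional expectation is almost surely the constant `E[-U 1_{|U| > η}]` with
`U = X² - Δ`, `X ~ N(0, Δ)`. On `{|U| > η}` one has `|U| ≤ U² / η`, so this constant is at most
`E[U²] / η = Var(X²) / η = 2Δ² / η` in absolute value. Summing the `n` terms with `|Z| ≤ C`
gives `max_i |I_n^i| ≤ 2CnΔ² / η = 2CΔ / η` almost surely, and the tail bound follows.
-/

open MeasureTheory ProbabilityTheory Filter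

/-- `W` is a standard Brownian motion with respect to the filtration `F` (of sub-σ-algebras of
the ambient σ-algebra) under the probability measure `P`: `F` is a filtration, `W` is adapted,
`W 0 = 0`, `W` has continuous paths, and for `0 ≤ s ≤ t` the increment `W t - W s` is
independent of `F s` with distribution `N(0, t - s)`. -/
def IsStdBM {Ω : Type*} [m : MeasurableSpace Ω] (P : Measure Ω)
    (F : ℝ → MeasurableSpace Ω) (W : ℝ → Ω → ℝ) : Prop :=
  (∀ t, F t ≤ m) ∧ (∀ s t : ℝ, s ≤ t → F s ≤ F t) ∧
  (∀ t, @Measurable Ω ℝ (F t) _ (W t)) ∧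
  (∀ ω, W 0 ω = 0) ∧
  (∀ ω, Continuous fun t => W t ω) ∧
  (∀ s t : ℝ, 0 ≤ s → s ≤ t →
    Indep (MeasurableSpace.comap (fun ω => W t ω - W s ω) inferInstance) (F s) P ∧
    Measure.map (fun ω => W t ω - W s ω) P = gaussianReal 0 (t - s).toNNReal)

open Real
open scoped NNReal

lemma deriv_mul_exp_mul_sq_div_two (a : ℝ) {p p' q : ℝ → ℝ} (hp : ∀ t, HasDerivAt p (p' t) t)
    (hq : ∀ t, p' t + a * t * p t = q t) :
    deriv (fun t => p t * rexp (a * t ^ 2 / 2)) = fun t => q t * rexp (a * t ^ 2 / 2) := by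
  ext t
  have hexp : HasDerivAt (fun t => rexp (a * t ^ 2 / 2)) (rexp (a * t ^ 2 / 2) * (a * t)) t := by
    convert (((hasDerivAt_pow 2 t).const_mul a).div_const 2).exp using 1
    push_cast
    ring
  rw [((hp t).fun_mul hexp).deriv, ← hq]
  ring

lemma integral_pow_four_gaussianReal (v : ℝ≥0) :
    ∫ x, x ^ 4 ∂gaussianReal 0 v = 3 * (v : ℝ) ^ 2 := by
  have hmgf := iteratedDeriv_mgf_zero (X := fun x : ℝ => x) (μ := gaussianReal 0 v) (by simp) 4
  simp only [mgf_fun_id_gaussianReal, zero_mul, zero_add, Pi.pow_apply] at hmgf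
  rw [← hmgf]
  simp only [iteratedDeriv_succ', iteratedDeriv_zero]
  set a : ℝ := (v : ℝ)
  have d1 := deriv_mul_exp_mul_sq_div_two a (p := fun _ => 1) (q := fun t => a * t)
    (fun t => hasDerivAt_const t 1) (fun t => by ring)
  have d2 := deriv_mul_exp_mul_sq_div_two a (p := fun t => a * t)
    (q := fun t => a + a ^ 2 * t ^ 2)
    (fun t => by simpa using (hasDerivAt_id t).const_mul a) (fun t => by ring)
  have d3 := deriv_mul_exp_mul_sq_div_two a (p := fun t => a + a ^ 2 * t ^ 2)
    (q := fun t => 3 * a ^ 2 * t + a ^ 3 * t ^ 3)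
    (fun t => ((hasDerivAt_pow 2 t).const_mul (a ^ 2)).const_add a) (fun t => by push_cast; ring)
  have d4 := deriv_mul_exp_mul_sq_div_two a (p := fun t => 3 * a ^ 2 * t + a ^ 3 * t ^ 3)
    (q := fun t => 3 * a ^ 2 + 6 * a ^ 3 * t ^ 2 + a ^ 4 * t ^ 4)
    (fun t => ((hasDerivAt_id t).const_mul (3 * a ^ 2)).add ((hasDerivAt_pow 3 t).const_mul (a ^ 3)))
    (fun t => by push_cast; ring)
  simp only [one_mul] at d1
  rw [d1, d2, d3, d4]
  simp

lemma integral_sq_gaussianReal (v : ℝ≥0) : ∫ x, x ^ 2 ∂gaussianReal 0 v = v := by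
  have hvar := variance_fun_id_gaussianReal (μ := 0) (v := v)
  rw [variance_eq_integral measurable_id'.aemeasurable] at hvar
  simpa using hvar

lemma integrable_pow_gaussianReal (μ : ℝ) (v : ℝ≥0) (k : ℕ) :
    Integrable (fun x => x ^ k) (gaussianReal μ v) :=
  integrable_pow_of_mem_interior_integrableExpSet (X := fun x => x) (by simp) k

lemma integrable_sq_sub_sq_gaussianReal (μ c : ℝ) (v : ℝ≥0) :
    Integrable (fun x => (x ^ 2 - c) ^ 2) (gaussianReal μ v) := by
  have hexpand : (fun x : ℝ => (x ^ 2 - c) ^ 2) = fun x => x ^ 4 - 2 * c * x ^ 2 + c ^ 2 := by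
    ext x
    ring
  rw [hexpand]
  exact ((integrable_pow_gaussianReal μ v 4).sub
    ((integrable_pow_gaussianReal μ v 2).const_mul _)).add (integrable_const _)

lemma integral_sq_sub_var_sq_gaussianReal (v : ℝ≥0) :
    ∫ x, (x ^ 2 - (v : ℝ)) ^ 2 ∂gaussianReal 0 v = 2 * (v : ℝ) ^ 2 := by
  have hexpand : (fun x : ℝ => (x ^ 2 - (v : ℝ)) ^ 2) =
      fun x => x ^ 4 - 2 * (v : ℝ) * x ^ 2 + (v : ℝ) ^ 2 := by
    ext x
    ring
  have h4 := integrable_pow_gaussianReal 0 v 4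
  have h2 := (integrable_pow_gaussianReal 0 v 2).const_mul (2 * (v : ℝ))
  have h42 : Integrable (fun x => x ^ 4 - 2 * (v : ℝ) * x ^ 2) (gaussianReal 0 v) := h4.sub h2
  rw [hexpand, integral_add h42 (integrable_const _), integral_sub h4 h2,
    integral_const_mul, integral_pow_four_gaussianReal, integral_sq_gaussianReal]
  simp only [integral_const, probReal_univ, smul_eq_mul, one_mul]
  ring

lemma abs_ite_lt_abs_neg_le_sq_div {η : ℝ} (hη : 0 < η) (u : ℝ) :
    |if η < |u| then -u else 0| ≤ u ^ 2 / η := by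
  split_ifs with hu
  · rw [abs_neg, le_div_iff₀ hη, ← sq_abs]
    nlinarith [abs_nonneg u]
  · rw [abs_zero]
    positivity

lemma abs_integral_ite_lt_abs_neg_le {α : Type*} [MeasurableSpace α] {μ : Measure α}
    {Y : α → ℝ} {η : ℝ} (hη : 0 < η) (hY : Integrable (fun a => Y a ^ 2) μ) :
    |∫ a, (if η < |Y a| then -Y a else 0) ∂μ| ≤ (∫ a, Y a ^ 2 ∂μ) / η := by
  rw [← integral_div]
  exact norm_integral_le_of_norm_le (hY.div_const η)
    (ae_of_all _ fun a => (norm_eq_abs _).trans_le (abs_ite_lt_abs_neg_le_sq_div hη (Y a)))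

lemma abs_sum_mul_le_card_mul_mul {ι : Type*} (s : Finset ι) {a b : ι → ℝ} {A B : ℝ}
    (ha : ∀ k ∈ s, |a k| ≤ A) (hb : ∀ k ∈ s, |b k| ≤ B) :
    |∑ k ∈ s, a k * b k| ≤ s.card * (A * B) := by
  calc |∑ k ∈ s, a k * b k| ≤ ∑ k ∈ s, |a k * b k| := Finset.abs_sum_le_sum_abs _ _
    _ ≤ ∑ _k ∈ s, A * B := Finset.sum_le_sum fun k hk => by
        rw [abs_mul]
        exact mul_le_mul (ha k hk) (hb k hk) (abs_nonneg _) ((abs_nonneg _).trans (ha k hk))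
    _ = s.card * (A * B) := by rw [Finset.sum_const, nsmul_eq_mul]

lemma measure_le_ofReal_div_of_ae_le {Ω : Type*} [MeasurableSpace Ω] {P : Measure Ω}
    [IsProbabilityMeasure P] {X : Ω → ℝ} {B γ : ℝ} (hγ : 0 < γ) (hX : ∀ᵐ ω ∂P, X ω ≤ B) :
    P {ω | γ ≤ X ω} ≤ ENNReal.ofReal (B / γ) := by
  by_cases hγB : γ ≤ B
  · exact prob_le_one.trans (ENNReal.one_le_ofReal.mpr ((one_le_div hγ).mpr hγB))
  · have hnull : P {ω | γ ≤ X ω} = 0 :=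
      measure_mono_null (fun ω (hγX : γ ≤ X ω) hXB => hγB (hγX.trans hXB)) (ae_iff.mp hX)
    simp [hnull]

namespace IsStdBM

variable {Ω : Type*} [MeasurableSpace Ω] {P : Measure Ω} {F : ℝ → MeasurableSpace Ω}
  {W : ℝ → Ω → ℝ}

lemma measurable_increment (hW : IsStdBM P F W) (s t : ℝ) :
    Measurable fun ω => W t ω - W s ω :=
  ((hW.2.2.1 t).mono (hW.1 t) le_rfl).sub ((hW.2.2.1 s).mono (hW.1 s) le_rfl)

lemma condExp_comp_increment_ae_eq [IsFiniteMeasure P] (hW : IsStdBM P F W) {g : ℝ → ℝ}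
    (hg : Measurable g) {s t : ℝ} (hs : 0 ≤ s) (hst : s ≤ t) :
    P[fun ω => g (W t ω - W s ω) | F s] =ᵐ[P]
      fun _ => ∫ x, g x ∂gaussianReal 0 (t - s).toNNReal := by
  obtain ⟨hindep, hlaw⟩ := hW.2.2.2.2.2 s t hs hst
  have hincr := hW.measurable_increment s t
  rw [← hlaw, integral_map hincr.aemeasurable hg.aestronglyMeasurable]
  exact condExp_indep_eq hincr.comap_le (hW.1 s)
    (hg.comp (Measurable.of_comap_le le_rfl)).stronglyMeasurable hindep

lemma abs_condExp_truncated_increment_le [IsFiniteMeasure P] (hW : IsStdBM P F W)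
    {s t Δ η : ℝ} (hs : 0 ≤ s) (hst : s ≤ t) (hΔ : t - s = Δ) (hη : 0 < η) :
    ∀ᵐ ω ∂P, |(P[fun ω' => if η < |(W t ω' - W s ω') ^ 2 - Δ|
        then -((W t ω' - W s ω') ^ 2 - Δ) else 0 | F s]) ω| ≤ 2 * Δ ^ 2 / η := by
  have hg : Measurable fun x : ℝ => if η < |x ^ 2 - Δ| then -(x ^ 2 - Δ) else 0 :=
    Measurable.ite (measurableSet_lt measurable_const (by fun_prop)) (by fun_prop) measurable_const
  have hv : ((t - s).toNNReal : ℝ) = Δ := by rw [Real.coe_toNNReal _ (sub_nonneg.mpr hst), hΔ]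
  filter_upwards [hW.condExp_comp_increment_ae_eq hg hs hst] with ω hω
  rw [hω]
  calc _ ≤ (∫ x, (x ^ 2 - Δ) ^ 2 ∂gaussianReal 0 (t - s).toNNReal) / η :=
        abs_integral_ite_lt_abs_neg_le hη (integrable_sq_sub_sq_gaussianReal 0 Δ _)
    _ = 2 * Δ ^ 2 / η := by rw [← hv, integral_sq_sub_var_sq_gaussianReal]

end IsStdBM

theorem compensator_part_general (C : ℝ) (hC : 0 < C)
    {Ω : Type*} [m : MeasurableSpace Ω] (P : Measure Ω) [IsProbabilityMeasure P]
    (F : ℝ → MeasurableSpace Ω) (W : ℝ → Ω → ℝ) (hW : IsStdBM P F W)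
    (n p : ℕ) (hn : 0 < n)
    (Z : Fin p → ℝ → Ω → ℝ)
    (hZbd : ∀ i, ∀ t ∈ Set.Icc (0 : ℝ) 1, ∀ ω, |Z i t ω| ≤ C)
    (γ η : ℝ) (hγ : 0 < γ) (hη : 0 < η) :
    P {ω | γ ≤ ⨆ i : Fin p, |(1 / ((n : ℝ) * (1 / n))) * ∑ k : Fin n,
        Z i ((k : ℕ) / n) ω *
          (P[(fun ω' =>
              if η < |(W (((k : ℕ) + 1) / n) ω' - W ((k : ℕ) / n) ω') ^ 2 - 1 / n|
                then -((W (((k : ℕ) + 1) / n) ω' - W ((k : ℕ) / n) ω') ^ 2 - 1 / n)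
                else 0)|F ((k : ℕ) / n)]) ω|} ≤
      ENNReal.ofReal (2 * C * (1 / n) / (γ * η)) := by
  have hn' : (n : ℝ) ≠ 0 := by positivity
  have hcondExp := ae_all_iff.mpr fun k : Fin n =>
    hW.abs_condExp_truncated_increment_le (s := (k : ℕ) / n) (t := ((k : ℕ) + 1) / n)
      (Δ := 1 / n) (by positivity) (by gcongr; linarith) (by ring) hη
  have hZ : ∀ i, ∀ k : Fin n, ∀ ω, |Z i ((k : ℕ) / n) ω| ≤ C := fun i k =>
    hZbd i _ ⟨by positivity, div_le_one_of_le₀ (by exact_mod_cast k.isLt.le) (Nat.cast_nonneg _)⟩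
  refine (measure_le_ofReal_div_of_ae_le (B := 2 * C * (1 / n) / η) hγ ?_).trans_eq
    (by rw [div_div, mul_comm η])
  filter_upwards [hcondExp] with ω hω
  refine Real.iSup_le (fun i => ?_) (by positivity)
  rw [mul_one_div_cancel hn', div_one, one_mul]
  calc _ ≤ (Finset.univ : Finset (Fin n)).card * (C * (2 * (1 / (n : ℝ)) ^ 2 / η)) :=
        abs_sum_mul_le_card_mul_mul _ (fun k _ => hZ i k ω) (fun k _ => hω k)
    _ = 2 * C * (1 / n) / η := by
        rw [Finset.card_univ, Fintype.card_fin]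
        field_simp

/-- Compensator part in the proof of Lemma 4.4: with `Δ = 1/n`, `t_k = k/n`,
`U_k = (W_{t_k} - W_{t_{k-1}})² - Δ` and
`I_n^i = (1/(nΔ)) Σ_k Z^i_{t_{k-1}} E[-U_k 1_{|U_k| > η} | F_{t_{k-1}}]`,
one has `P(max_{1≤i≤p} |I_n^i| ≥ γ) ≤ 2CΔ/(γη)` for all `γ, η > 0`. -/
theorem compensator_part (C : ℝ) (hC : 0 < C)
    {Ω : Type*} [m : MeasurableSpace Ω] (P : Measure Ω) [IsProbabilityMeasure P]
    (F : ℝ → MeasurableSpace Ω) (W : ℝ → Ω → ℝ) (hW : IsStdBM P F W)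
    (n p : ℕ) (hn : 0 < n) (hp : 0 < p)
    (Z : Fin p → ℝ → Ω → ℝ)
    (hZad : ∀ i, ∀ t ∈ Set.Icc (0 : ℝ) 1, @Measurable _ _ (F t) _ (Z i t))
    (hZbd : ∀ i, ∀ t ∈ Set.Icc (0 : ℝ) 1, ∀ ω, |Z i t ω| ≤ C)
    (γ η : ℝ) (hγ : 0 < γ) (hη : 0 < η) :
    P {ω | γ ≤ ⨆ i : Fin p, |(1 / ((n : ℝ) * (1 / n))) * ∑ k : Fin n,
        Z i ((k : ℕ) / n) ω *
          (P[(fun ω' =>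
              if η < |(W (((k : ℕ) + 1) / n) ω' - W ((k : ℕ) / n) ω') ^ 2 - 1 / n|
                then -((W (((k : ℕ) + 1) / n) ω' - W ((k : ℕ) / n) ω') ^ 2 - 1 / n)
                else 0)|F ((k : ℕ) / n)]) ω|} ≤
      ENNReal.ofReal (2 * C * (1 / n) / (γ * η)) :=
  compensator_part_general C hC (m := m) P F W hW n p hn Z hZbd γ η hγ hη
end

section
/- (Large-deviation part in the proof of Lemma 4.4.) Let C > 0 be a constant. On a probability space carrying a filtration (F_t)_{t≥0} and a standard Brownian motion W with respect to (F_t), let n, p ∈ ℕ and let Z^1, …, Z^p be (F_t)-adapted real-valued processes on [0, 1] with sup_{t∈[0,1]} max_{1≤i≤p} |Z_t^i| ≤ C. Set Δ := 1/n, t_k := k/n, U_k := (W_{t_k} − W_{t_{k−1}})² − Δ, and for η > 0 let G_n^i := (1/(nΔ)) Σ_{k=1}^n Z_{t_{k−1}}^i U_k 1_{|U_k| > η}. Then for every γ > 0 and η > 0, P( max_{1≤i≤p} |G_n^i| ≥ γ ) ≤ 2CΔ/(γη). -/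
/-! On the event `|U_k| > η` we have `|U_k| ≤ U_k² / η`, so pathwise every `|G_n^i|` is at most
`(C / η) ∑_k U_k²`. The increment `W_{t_k} - W_{t_{k-1}}` is `N(0, Δ)`, and for `X ~ N(0, v)` the
moments `E X² = v`, `E X⁴ = 3v²` give `E (X² - v)² = 2v²`; hence that bound has expectation
`(C / η) · n · 2Δ² = 2CΔ / η`, and Markov's inequality concludes. -/

open MeasureTheory ProbabilityTheory Filter

open Real
open scoped NNReal

lemma integral_pow_two_mul_mul_exp_neg_mul_sq {b : ℝ} (hb : 0 < b) (k : ℕ) :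
    ∫ x : ℝ, x ^ (2 * k) * exp (-b * x ^ 2) = Gamma (k + 1 / 2) * b ^ (-(k + 1 / 2 : ℝ)) := by
  have h_abs : (fun x : ℝ => x ^ (2 * k) * exp (-b * x ^ 2)) =
      fun x => |x| ^ ((2 * k : ℕ) : ℝ) * exp (-b * |x| ^ (2 : ℝ)) := by
    ext x
    rw [rpow_natCast, rpow_two, sq_abs, (even_two_mul k).pow_abs]
  have h_exp : ((2 * k : ℕ) + 1 : ℝ) / 2 = k + 1 / 2 := by push_cast; ring
  rw [h_abs, integral_comp_abs (f := fun y => y ^ ((2 * k : ℕ) : ℝ) * exp (-b * y ^ (2 : ℝ))),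
    integral_rpow_mul_exp_neg_mul_rpow two_pos (neg_one_lt_zero.trans_le (Nat.cast_nonneg _)) hb,
    neg_div, h_exp]
  ring

lemma integral_pow_two_mul_gaussianReal (v : ℝ≥0) (k : ℕ) :
    ∫ x, x ^ (2 * k) ∂gaussianReal 0 v = (2 * v) ^ k * Gamma (k + 1 / 2) / √π := by
  rcases eq_or_ne v 0 with rfl | hv
  · rcases k with _ | k
    · simp [gaussianReal_zero_var, -one_div, Gamma_one_half_eq, (sqrt_pos.2 pi_pos).ne']
    · simp [gaussianReal_zero_var]
  have h2v : (0 : ℝ) < 2 * v := by positivity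
  have h_pdf : ∀ x : ℝ, gaussianPDFReal 0 v x * x ^ (2 * k) =
      (√(2 * v) * √π)⁻¹ * (x ^ (2 * k) * exp (-(2 * v : ℝ)⁻¹ * x ^ 2)) := by
    intro x
    rw [gaussianPDFReal, ← sqrt_mul h2v.le, sub_zero]
    ring_nf
  simp_rw [integral_gaussianReal_eq_integral_smul hv, smul_eq_mul, h_pdf, integral_const_mul,
    integral_pow_two_mul_mul_exp_neg_mul_sq (inv_pos.2 h2v), inv_rpow h2v.le, ← rpow_neg h2v.le,
    neg_neg, rpow_add h2v, rpow_natCast, sqrt_eq_rpow]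
  have : (0 : ℝ) < (2 * v) ^ (1 / 2 : ℝ) := by positivity
  have : (0 : ℝ) < π ^ (1 / 2 : ℝ) := by positivity
  field_simp

lemma lintegral_sq_sub_var_sq_gaussianReal (v : ℝ≥0) :
    ∫⁻ x, ENNReal.ofReal ((x ^ 2 - v) ^ 2) ∂gaussianReal 0 v = ENNReal.ofReal (2 * v ^ 2) := by
  have h_expand : (fun x : ℝ => (x ^ 2 - v) ^ 2) =
      fun x => x ^ 4 - 2 * v * x ^ 2 + (v : ℝ) ^ 2 := by
    ext x; ring
  have h_gamma_3_2 : Gamma (1 + 1 / 2) = 1 / 2 * √π := by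
    rw [add_comm, Gamma_add_one (by norm_num), Gamma_one_half_eq]
  have h_gamma_5_2 : Gamma (2 + 1 / 2) = 3 / 4 * √π := by
    rw [show (2 : ℝ) + 1 / 2 = 1 + 1 / 2 + 1 by norm_num, Gamma_add_one (by norm_num),
      h_gamma_3_2]
    ring
  have h4 := integral_pow_two_mul_gaussianReal v 2
  have h2 := integral_pow_two_mul_gaussianReal v 1
  push_cast at h4 h2
  have hi4 := integrable_pow_gaussianReal 0 v 4
  have hi2 := (integrable_pow_gaussianReal 0 v 2).const_mul (2 * v : ℝ)
  have hi : Integrable (fun x : ℝ => (x ^ 2 - v) ^ 2) (gaussianReal 0 v) := by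
    rw [h_expand]; exact (hi4.sub hi2).add (integrable_const _)
  rw [← ofReal_integral_eq_lintegral_ofReal hi (ae_of_all _ fun x => sq_nonneg _), h_expand,
    integral_add (f := fun x => x ^ 4 - 2 * (v : ℝ) * x ^ 2) (hi4.sub hi2) (integrable_const _),
    integral_sub hi4 hi2, integral_const_mul, h4, h2, h_gamma_3_2, h_gamma_5_2]
  have hπ : √π ≠ 0 := (sqrt_pos.2 pi_pos).ne'
  congr 1
  simp only [integral_const, probReal_univ, smul_eq_mul, one_mul]
  field_simp
  ring

namespace IsStdBM

variable {Ω : Type*} [MeasurableSpace Ω] {P : Measure Ω} {F : ℝ → MeasurableSpace Ω}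
  {W : ℝ → Ω → ℝ}

lemma measurable (hW : IsStdBM P F W) (t : ℝ) : Measurable (W t) :=
  (hW.2.2.1 t).mono (hW.1 t) le_rfl

lemma lintegral_sq_increment_sub_sq (hW : IsStdBM P F W) {s t : ℝ} (hs : 0 ≤ s) (hst : s ≤ t) :
    ∫⁻ ω, ENNReal.ofReal (((W t ω - W s ω) ^ 2 - (t - s)) ^ 2) ∂P =
      ENNReal.ofReal (2 * (t - s) ^ 2) := by
  have hv : ((t - s).toNNReal : ℝ) = t - s := Real.coe_toNNReal _ (sub_nonneg.2 hst)
  have h := lintegral_sq_sub_var_sq_gaussianReal (t - s).toNNReal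
  rwa [← (hW.2.2.2.2.2 s t hs hst).2, hv, lintegral_map (by fun_prop)
    (g := fun ω => W t ω - W s ω) ((hW.measurable t).sub (hW.measurable s))] at h

lemma lintegral_sum_sq_increment_sub (hW : IsStdBM P F W) (n : ℕ) :
    ∫⁻ ω, ENNReal.ofReal (∑ k : Fin n,
        ((W (((k : ℕ) + 1) / n) ω - W ((k : ℕ) / n) ω) ^ 2 - 1 / n) ^ 2) ∂P =
      ENNReal.ofReal (2 / n) := by
  have hWm := hW.measurable
  have h_term (k : Fin n) :
      ∫⁻ ω, ENNReal.ofReal (((W (((k : ℕ) + 1) / n) ω - W ((k : ℕ) / n) ω) ^ 2 - 1 / n) ^ 2) ∂P =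
        ENNReal.ofReal (2 * (1 / n) ^ 2) := by
    have h_step : (((k : ℕ) + 1) / n - (k : ℕ) / n : ℝ) = 1 / n := by ring
    rw [← h_step]
    exact hW.lintegral_sq_increment_sub_sq (by positivity) (by gcongr; linarith)
  simp_rw [ENNReal.ofReal_sum_of_nonneg fun _ _ => sq_nonneg _]
  rw [lintegral_finsetSum _ (fun k _ => by fun_prop), Finset.sum_congr rfl fun k _ => h_term k,
    Finset.sum_const, Finset.card_univ, Fintype.card_fin, nsmul_eq_mul, ← ENNReal.ofReal_natCast,
    ← ENNReal.ofReal_mul n.cast_nonneg]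
  rcases eq_or_ne (n : ℝ) 0 with hn | hn
  · simp [hn]
  · field_simp

end IsStdBM

lemma abs_ite_lt_abs_le_sq_div {η u : ℝ} (hη : 0 < η) :
    |if η < |u| then u else 0| ≤ u ^ 2 / η := by
  split_ifs with h
  · rw [le_div_iff₀ hη, ← sq_abs, sq]
    exact mul_le_mul_of_nonneg_left h.le (abs_nonneg u)
  · rw [abs_zero]
    positivity

lemma iSup_abs_sum_mul_ite_le {ι κ : Type*} [Fintype κ] {C η : ℝ} (hC : 0 ≤ C) (hη : 0 < η)
    (z : ι → κ → ℝ) (u : κ → ℝ) (hz : ∀ i k, |z i k| ≤ C) :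
    ⨆ i, |∑ k, z i k * (if η < |u k| then u k else 0)| ≤ C / η * ∑ k, u k ^ 2 := by
  refine Real.iSup_le (fun i => ?_) (by positivity)
  calc |∑ k, z i k * (if η < |u k| then u k else 0)|
      ≤ ∑ k, |z i k * (if η < |u k| then u k else 0)| := Finset.abs_sum_le_sum_abs _ _
    _ ≤ ∑ k, C * (u k ^ 2 / η) := Finset.sum_le_sum fun k _ => by
        rw [abs_mul]
        exact mul_le_mul (hz i k) (abs_ite_lt_abs_le_sq_div hη) (abs_nonneg _) hC
    _ = C / η * ∑ k, u k ^ 2 := by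
        rw [Finset.mul_sum]
        exact Finset.sum_congr rfl fun _ _ => by ring

theorem large_deviation_part_general (C : ℝ) (hC : 0 < C)
    {Ω : Type*} [m : MeasurableSpace Ω] (P : Measure Ω)
    (F : ℝ → MeasurableSpace Ω) (W : ℝ → Ω → ℝ) (hW : IsStdBM P F W)
    (n p : ℕ) (hn : 0 < n)
    (Z : Fin p → ℝ → Ω → ℝ)
    (hZbd : ∀ i, ∀ t ∈ Set.Icc (0 : ℝ) 1, ∀ ω, |Z i t ω| ≤ C)
    (γ η : ℝ) (hγ : 0 < γ) (hη : 0 < η) :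
    P {ω | γ ≤ ⨆ i : Fin p, |(1 / ((n : ℝ) * (1 / n))) * ∑ k : Fin n,
        Z i ((k : ℕ) / n) ω *
          (if η < |(W (((k : ℕ) + 1) / n) ω - W ((k : ℕ) / n) ω) ^ 2 - 1 / n|
            then (W (((k : ℕ) + 1) / n) ω - W ((k : ℕ) / n) ω) ^ 2 - 1 / n
            else 0)|} ≤
      ENNReal.ofReal (2 * C * (1 / n) / (γ * η)) := by
  have hWm := hW.measurable
  have h_one : 1 / ((n : ℝ) * (1 / n)) = 1 := by field_simp
  have h_grid (k : Fin n) : ((k : ℕ) / n : ℝ) ∈ Set.Icc 0 1 :=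
    ⟨by positivity, div_le_one_of_le₀ (mod_cast k.is_lt.le) n.cast_nonneg⟩
  have h_sub : {ω | γ ≤ ⨆ i : Fin p, |(1 / ((n : ℝ) * (1 / n))) * ∑ k : Fin n,
        Z i ((k : ℕ) / n) ω *
          (if η < |(W (((k : ℕ) + 1) / n) ω - W ((k : ℕ) / n) ω) ^ 2 - 1 / n|
            then (W (((k : ℕ) + 1) / n) ω - W ((k : ℕ) / n) ω) ^ 2 - 1 / n
            else 0)|} ⊆ {ω | ENNReal.ofReal γ ≤ ENNReal.ofReal (C / η * ∑ k : Fin n,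
          ((W (((k : ℕ) + 1) / n) ω - W ((k : ℕ) / n) ω) ^ 2 - 1 / n) ^ 2)} := by
    intro ω hω
    simp_rw [h_one, one_mul] at hω
    exact ENNReal.ofReal_le_ofReal (hω.trans (iSup_abs_sum_mul_ite_le hC.le hη _ _
      fun i k => hZbd i _ (h_grid k) ω))
  calc _ ≤ _ := measure_mono h_sub
    _ ≤ _ := meas_ge_le_lintegral_div (by fun_prop) (ENNReal.ofReal_pos.2 hγ).ne'
        ENNReal.ofReal_ne_top
    _ = _ := by
      simp_rw [ENNReal.ofReal_mul (div_pos hC hη).le]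
      rw [lintegral_const_mul' _ _ ENNReal.ofReal_ne_top, hW.lintegral_sum_sq_increment_sub n,
        ← ENNReal.ofReal_mul (div_pos hC hη).le, ← ENNReal.ofReal_div_of_pos hγ]
      congr 1
      field_simp

/-- Large-deviation part in the proof of Lemma 4.4: with `Δ = 1/n`, `t_k = k/n`,
`U_k = (W_{t_k} - W_{t_{k-1}})² - Δ` and
`G_n^i = (1/(nΔ)) Σ_k Z^i_{t_{k-1}} U_k 1_{|U_k| > η}`,
one has `P(max_{1≤i≤p} |G_n^i| ≥ γ) ≤ 2CΔ/(γη)` for all `γ, η > 0`. -/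
theorem large_deviation_part (C : ℝ) (hC : 0 < C)
    {Ω : Type*} [m : MeasurableSpace Ω] (P : Measure Ω) [IsProbabilityMeasure P]
    (F : ℝ → MeasurableSpace Ω) (W : ℝ → Ω → ℝ) (hW : IsStdBM P F W)
    (n p : ℕ) (hn : 0 < n) (hp : 0 < p)
    (Z : Fin p → ℝ → Ω → ℝ)
    (hZad : ∀ i, ∀ t ∈ Set.Icc (0 : ℝ) 1, @Measurable _ _ (F t) _ (Z i t))
    (hZbd : ∀ i, ∀ t ∈ Set.Icc (0 : ℝ) 1, ∀ ω, |Z i t ω| ≤ C)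
    (γ η : ℝ) (hγ : 0 < γ) (hη : 0 < η) :
    P {ω | γ ≤ ⨆ i : Fin p, |(1 / ((n : ℝ) * (1 / n))) * ∑ k : Fin n,
        Z i ((k : ℕ) / n) ω *
          (if η < |(W (((k : ℕ) + 1) / n) ω - W ((k : ℕ) / n) ω) ^ 2 - 1 / n|
            then (W (((k : ℕ) + 1) / n) ω - W ((k : ℕ) / n) ω) ^ 2 - 1 / n
            else 0)|} ≤
      ENNReal.ofReal (2 * C * (1 / n) / (γ * η)) :=
  large_deviation_part_general C hC (m := m) P F W hW n p hn Z hZbd γ η hγ hη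
end
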